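/- arXiv:2501.07863 — 8 statements merged into one kernel-verified Lean document; each statement's English description precedes it below -/
import Mathlib

section
/- Let C₁, C₂ ⊆ ℝⁿ be nonempty closed convex sets. For any x ∈ ℝⁿ and any ρ ≥ ‖x‖ + d(x, C₁) + d(x, C₂), one has ‖proj_{C₁}(x) - proj_{C₂}(x)‖² ≤ ρ · max{ sup_{p ∈ C₁} d(p, C₂), sup_{q ∈ C₂} d(q, C₁) }, provided the right-hand side suprema are finite. -/
/-!
Write `pᵢ` for the projection of `x` onto `Cᵢ`. Then
`‖p₁ - p₂‖² = ⟪p₁ - x, p₁ - p₂⟫ + ⟪p₂ - x, p₂ - p₁⟫`, and each term is controlled by the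
variational inequality of the projection: for every `z ∈ C₁`,
`⟪p₁ - x, p₁ - p₂⟫ = ⟪p₁ - x, p₁ - z⟫ + ⟪p₁ - x, z - p₂⟫ ≤ ‖p₁ - x‖ ‖z - p₂‖`,
so `⟪p₁ - x, p₁ - p₂⟫ ≤ d(x, C₁) d(p₂, C₁)`, and `d(p₂, C₁)` is bounded by the Hausdorff distance.
-/

open Metric

open scoped RealInnerProductSpace

lemma infDist_eq_norm_of_forall_norm_le {E : Type*} [SeminormedAddCommGroup E] {C : Set E}
    {x p : E} (hp : p ∈ C) (hmin : ∀ y ∈ C, ‖p - x‖ ≤ ‖y - x‖) :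
    infDist x C = ‖p - x‖ := by
  refine le_antisymm ?_ ((le_infDist ⟨p, hp⟩).2 fun y hy => ?_)
  · simpa [dist_eq_norm, norm_sub_rev] using infDist_le_dist_of_mem (x := x) hp
  · rw [dist_comm, dist_eq_norm]
    exact hmin y hy

section NearestPoint

variable {E : Type*} [NormedAddCommGroup E] [InnerProductSpace ℝ E] {C : Set E} {x p : E}

lemma real_inner_sub_sub_nonpos_of_forall_norm_le (hC : Convex ℝ C) (hp : p ∈ C)
    (hmin : ∀ y ∈ C, ‖p - x‖ ≤ ‖y - x‖) {z : E} (hz : z ∈ C) : ⟪p - x, p - z⟫ ≤ 0 := by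
  have hinf : ‖x - p‖ = ⨅ w : C, ‖x - w‖ := by
    simp only [← dist_eq_norm, ← infDist_eq_iInf, infDist_eq_norm_of_forall_norm_le hp hmin,
      dist_comm x p]
  rw [← inner_neg_neg, neg_sub, neg_sub]
  exact (norm_eq_iInf_iff_real_inner_le_zero hC hp).1 hinf z hz

lemma real_inner_sub_sub_le_norm_mul_infDist (hC : Convex ℝ C) (hp : p ∈ C)
    (hmin : ∀ y ∈ C, ‖p - x‖ ≤ ‖y - x‖) (y : E) :
    ⟪p - x, p - y⟫ ≤ ‖p - x‖ * infDist y C := by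
  rcases (norm_nonneg (p - x)).eq_or_lt with hzero | hpos
  · simp [norm_eq_zero.1 hzero.symm]
  rw [mul_comm, ← div_le_iff₀ hpos]
  refine (le_infDist ⟨p, hp⟩).2 fun z hz => ?_
  rw [div_le_iff₀ hpos]
  calc ⟪p - x, p - y⟫ = ⟪p - x, p - z⟫ + ⟪p - x, z - y⟫ := by
        rw [← inner_add_right, sub_add_sub_cancel]
    _ ≤ 0 + ‖p - x‖ * ‖z - y‖ :=
        add_le_add (real_inner_sub_sub_nonpos_of_forall_norm_le hC hp hmin hz)
          (real_inner_le_norm _ _)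
    _ = dist y z * ‖p - x‖ := by rw [zero_add, dist_eq_norm, norm_sub_rev y z, mul_comm]

end NearestPoint

theorem stmt_2_general (n : ℕ) (C₁ C₂ : Set (EuclideanSpace ℝ (Fin n)))
    (hconv₁ : Convex ℝ C₁) (hconv₂ : Convex ℝ C₂)
    (x p₁ p₂ : EuclideanSpace ℝ (Fin n))
    (hp₁ : p₁ ∈ C₁) (hp₁min : ∀ y ∈ C₁, ‖p₁ - x‖ ≤ ‖y - x‖)
    (hp₂ : p₂ ∈ C₂) (hp₂min : ∀ y ∈ C₂, ‖p₂ - x‖ ≤ ‖y - x‖)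
    (hbdd₁ : BddAbove (Set.range fun p : C₁ => infDist (p : EuclideanSpace ℝ (Fin n)) C₂))
    (hbdd₂ : BddAbove (Set.range fun q : C₂ => infDist (q : EuclideanSpace ℝ (Fin n)) C₁))
    (ρ : ℝ) (hρ : ‖x‖ + infDist x C₁ + infDist x C₂ ≤ ρ) :
    ‖p₁ - p₂‖ ^ 2 ≤ ρ *
      max (⨆ p : C₁, infDist (p : EuclideanSpace ℝ (Fin n)) C₂)
          (⨆ q : C₂, infDist (q : EuclideanSpace ℝ (Fin n)) C₁) := by
  set H := max (⨆ p : C₁, infDist (p : EuclideanSpace ℝ (Fin n)) C₂)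
      (⨆ q : C₂, infDist (q : EuclideanSpace ℝ (Fin n)) C₁)
  have hH₁ : infDist p₂ C₁ ≤ H := (le_ciSup hbdd₂ ⟨p₂, hp₂⟩).trans (le_max_right _ _)
  have hH₂ : infDist p₁ C₂ ≤ H := (le_ciSup hbdd₁ ⟨p₁, hp₁⟩).trans (le_max_left _ _)
  have hsplit : ‖p₁ - p₂‖ ^ 2 = ⟪p₁ - x, p₁ - p₂⟫ + ⟪p₂ - x, p₂ - p₁⟫ := by
    rw [← real_inner_self_eq_norm_sq, ← inner_neg_neg (p₂ - x), neg_sub, neg_sub,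
      ← inner_add_left, sub_add_sub_cancel]
  calc ‖p₁ - p₂‖ ^ 2 = ⟪p₁ - x, p₁ - p₂⟫ + ⟪p₂ - x, p₂ - p₁⟫ := hsplit
    _ ≤ ‖p₁ - x‖ * infDist p₂ C₁ + ‖p₂ - x‖ * infDist p₁ C₂ :=
        add_le_add (real_inner_sub_sub_le_norm_mul_infDist hconv₁ hp₁ hp₁min p₂)
          (real_inner_sub_sub_le_norm_mul_infDist hconv₂ hp₂ hp₂min p₁)
    _ = infDist x C₁ * infDist p₂ C₁ + infDist x C₂ * infDist p₁ C₂ := by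
        rw [infDist_eq_norm_of_forall_norm_le hp₁ hp₁min,
          infDist_eq_norm_of_forall_norm_le hp₂ hp₂min]
    _ ≤ (infDist x C₁ + infDist x C₂) * H := by
        rw [add_mul]
        exact add_le_add (mul_le_mul_of_nonneg_left hH₁ infDist_nonneg)
          (mul_le_mul_of_nonneg_left hH₂ infDist_nonneg)
    _ ≤ ρ * H :=
        mul_le_mul_of_nonneg_right (by linarith [norm_nonneg x]) (infDist_nonneg.trans hH₂)

theorem stmt_2 (n : ℕ) (C₁ C₂ : Set (EuclideanSpace ℝ (Fin n)))
    (hne₁ : C₁.Nonempty) (hne₂ : C₂.Nonempty)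
    (hcl₁ : IsClosed C₁) (hcl₂ : IsClosed C₂)
    (hconv₁ : Convex ℝ C₁) (hconv₂ : Convex ℝ C₂)
    (x p₁ p₂ : EuclideanSpace ℝ (Fin n))
    (hp₁ : p₁ ∈ C₁) (hp₁min : ∀ y ∈ C₁, ‖p₁ - x‖ ≤ ‖y - x‖)
    (hp₂ : p₂ ∈ C₂) (hp₂min : ∀ y ∈ C₂, ‖p₂ - x‖ ≤ ‖y - x‖)
    (hbdd₁ : BddAbove (Set.range fun p : C₁ => infDist (p : EuclideanSpace ℝ (Fin n)) C₂))
    (hbdd₂ : BddAbove (Set.range fun q : C₂ => infDist (q : EuclideanSpace ℝ (Fin n)) C₁))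
    (ρ : ℝ) (hρ : ‖x‖ + infDist x C₁ + infDist x C₂ ≤ ρ) :
    ‖p₁ - p₂‖ ^ 2 ≤ ρ *
      max (⨆ p : C₁, infDist (p : EuclideanSpace ℝ (Fin n)) C₂)
          (⨆ q : C₂, infDist (q : EuclideanSpace ℝ (Fin n)) C₁) :=
  stmt_2_general n C₁ C₂ hconv₁ hconv₂ x p₁ p₂ hp₁ hp₁min hp₂ hp₂min hbdd₁ hbdd₂ ρ hρ
end

section
/- Let φ : ℝᵐ → ℝ be the convex quadratic φ(λ) = (1/2)‖Aλ - c‖² with A an n×m matrix and c ∈ ℝⁿ, and let Δ_m be the unit simplex. Suppose λ* minimizes φ(λ) + ⟨λ, e⟩ over Δ_m and μ* minimizes φ over Δ_m, where e ∈ ℝᵐ. Then ‖Aλ* - Aμ*‖² ≤ 2⟨e, μ* - λ*⟩ ≤ 4‖e‖_∞. -/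
/-!
Both problems share the midpoint `ν` of `λ*` and `μ*`, which lies in the simplex. By the
parallelogram law `φ` is strongly convex along the segment in the seminorm `‖A ·‖`:
`φ ν = (φ λ* + φ μ*) / 2 - ‖A λ* - A μ*‖² / 8`. Testing the minimality of `μ*` against `ν`
gives `φ λ* - φ μ* ≥ ‖A λ* - A μ*‖² / 4`, and testing the minimality of `λ*` against `ν`
bounds `φ λ* - φ μ* + ‖A λ* - A μ*‖² / 4` by `⟨e, μ* - λ*⟩`; together they give the first
inequality. The second holds because `|⟨e, λ⟩| ≤ ‖e‖_∞` on the simplex.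
-/

open Matrix

theorem four_mul_le_sub_of_isMinOn_of_midpoint_le {V : Type*} [AddCommGroup V] [Module ℝ V]
    {S : Set V} (hS : Convex ℝ S) {f : V → ℝ} (g : V →ₗ[ℝ] ℝ) {x y : V} {κ : ℝ}
    (hx : x ∈ S) (hy : y ∈ S) (hf : f (midpoint ℝ x y) ≤ (f x + f y) / 2 - κ)
    (hxmin : IsMinOn (fun v ↦ f v + g v) S x) (hymin : IsMinOn f S y) :
    4 * κ ≤ g y - g x := by
  have hmid := hS.midpoint_mem hx hy
  have hg : g (midpoint ℝ x y) = (g x + g y) / 2 := by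
    rw [midpoint_eq_smul_add, map_smul, map_add, smul_eq_mul, invOf_eq_inv]
    ring
  have hxν := isMinOn_iff.mp hxmin _ hmid
  have hyν := isMinOn_iff.mp hymin _ hmid
  linarith

theorem half_sq_norm_midpoint_sub {E : Type*} [NormedAddCommGroup E] [InnerProductSpace ℝ E]
    (x y c : E) :
    1 / 2 * ‖midpoint ℝ x y - c‖ ^ 2 =
      (1 / 2 * ‖x - c‖ ^ 2 + 1 / 2 * ‖y - c‖ ^ 2) / 2 - ‖x - y‖ ^ 2 / 8 := by
  have := EuclideanGeometry.dist_sq_add_dist_sq_eq_two_mul_dist_midpoint_sq_add_half_dist_sq c x y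
  simp only [dist_comm c, dist_eq_norm] at this
  linarith

theorem abs_dotProduct_le_norm_of_mem_stdSimplex {ι : Type*} [Fintype ι] (e : ι → ℝ) {x : ι → ℝ}
    (hx : x ∈ stdSimplex ℝ ι) : |e ⬝ᵥ x| ≤ ‖e‖ :=
  calc |e ⬝ᵥ x| ≤ ∑ i, |e i * x i| := Finset.abs_sum_le_sum_abs _ _
    _ ≤ ∑ i, ‖e‖ * x i := by
      gcongr with i
      rw [abs_mul, abs_of_nonneg (hx.1 i)]
      exact mul_le_mul_of_nonneg_right (norm_le_pi_norm e i) (hx.1 i)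
    _ = ‖e‖ := by rw [← Finset.mul_sum, hx.2, mul_one]

theorem stmt_4 (n m : ℕ)
    (A : (Fin m → ℝ) →ₗ[ℝ] EuclideanSpace ℝ (Fin n))
    (c : EuclideanSpace ℝ (Fin n)) (e : Fin m → ℝ)
    (φ : (Fin m → ℝ) → ℝ)
    (hφ : ∀ lam, φ lam = (1 / 2) * ‖A lam - c‖ ^ 2)
    (lamStar muStar : Fin m → ℝ)
    (hlam : lamStar ∈ stdSimplex ℝ (Fin m))
    (hmu : muStar ∈ stdSimplex ℝ (Fin m))
    (hlamMin : ∀ lam ∈ stdSimplex ℝ (Fin m),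
      φ lamStar + ∑ j, lamStar j * e j ≤ φ lam + ∑ j, lam j * e j)
    (hmuMin : ∀ lam ∈ stdSimplex ℝ (Fin m), φ muStar ≤ φ lam) :
    ‖A lamStar - A muStar‖ ^ 2 ≤ 2 * ∑ j, e j * (muStar j - lamStar j) ∧
      2 * ∑ j, e j * (muStar j - lamStar j) ≤ 4 * ‖e‖ := by
  have hmid : φ (midpoint ℝ lamStar muStar) =
      (φ lamStar + φ muStar) / 2 - ‖A lamStar - A muStar‖ ^ 2 / 8 := by
    rw [hφ, hφ, hφ, midpoint_eq_smul_add, map_smul, map_add, ← midpoint_eq_smul_add]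
    exact half_sq_norm_midpoint_sub _ _ c
  have hlamIsMin : IsMinOn (fun lam ↦ φ lam + dotProductBilin ℝ ℝ e lam)
      (stdSimplex ℝ (Fin m)) lamStar :=
    isMinOn_iff.mpr fun lam hlamS => by
      simp only [dotProductBilin_apply_apply, dotProduct_comm e]
      exact hlamMin lam hlamS
  have hgap := four_mul_le_sub_of_isMinOn_of_midpoint_le (convex_stdSimplex ℝ (Fin m))
    (dotProductBilin ℝ ℝ e) hlam hmu hmid.le hlamIsMin (isMinOn_iff.mpr hmuMin)
  have hsub : ∑ j, e j * (muStar j - lamStar j) = e ⬝ᵥ muStar - e ⬝ᵥ lamStar :=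
    dotProduct_sub e muStar lamStar
  simp only [dotProductBilin_apply_apply] at hgap
  have hlamBound := abs_le.mp (abs_dotProduct_le_norm_of_mem_stdSimplex e hlam)
  have hmuBound := abs_le.mp (abs_dotProduct_le_norm_of_mem_stdSimplex e hmu)
  constructor <;> linarith
end

section
/- Let F = (f₁,…,f_m) : ℝⁿ → ℝᵐ be continuous and suppose the level set L_{f_{j₀}}(α) = {x : f_{j₀}(x) ≤ α} is bounded for some index j₀ and every α ∈ ℝ. Fix β ∈ ℝᵐ with L_F(β) = {x : F(x) ≤ β componentwise} nonempty. Then sup over F* in the image of the weak Pareto set intersected with L_F(β) of inf_{z ∈ F^{-1}(F*)} ‖z‖ is finite. -/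
/-- `x` is weakly Pareto optimal for the objectives `f j`. -/
def WeakPareto {n m : ℕ} (f : Fin m → EuclideanSpace ℝ (Fin n) → ℝ)
    (x : EuclideanSpace ℝ (Fin n)) : Prop :=
  ¬ ∃ y : EuclideanSpace ℝ (Fin n), ∀ j, f j y < f j x

theorem sInf_norm_le_norm_of_mem {E : Type*} [SeminormedAddGroup E] {p : E → Prop} {x : E}
    (hx : p x) : sInf {r : ℝ | ∃ z, p z ∧ r = ‖z‖} ≤ ‖x‖ :=
  csInf_le ⟨0, fun _ ⟨z, _, hr⟩ => hr ▸ norm_nonneg z⟩ ⟨x, hx, rfl⟩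

theorem stmt_9_general (n m : ℕ)
    (f : Fin m → EuclideanSpace ℝ (Fin n) → ℝ)
    (j₀ : Fin m)
    (hlev : ∀ α : ℝ, Bornology.IsBounded {x : EuclideanSpace ℝ (Fin n) | f j₀ x ≤ α})
    (β : Fin m → ℝ) :
    ∃ B : ℝ, ∀ zs : EuclideanSpace ℝ (Fin n),
      WeakPareto f zs → (∀ j, f j zs ≤ β j) →
        sInf {r : ℝ | ∃ z : EuclideanSpace ℝ (Fin n), (∀ j, f j z = f j zs) ∧ r = ‖z‖} ≤ B := by
  obtain ⟨R, hR⟩ := (hlev (β j₀)).subset_closedBall 0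
  refine ⟨R, fun zs _ hβ => ?_⟩
  calc sInf _ ≤ ‖zs‖ := sInf_norm_le_norm_of_mem fun _ => rfl
    _ ≤ R := by simpa using hR (hβ j₀)

theorem stmt_9 (n m : ℕ)
    (f : Fin m → EuclideanSpace ℝ (Fin n) → ℝ)
    (hcont : ∀ j, Continuous (f j))
    (j₀ : Fin m)
    (hlev : ∀ α : ℝ, Bornology.IsBounded {x : EuclideanSpace ℝ (Fin n) | f j₀ x ≤ α})
    (β : Fin m → ℝ)
    (hne : ({x : EuclideanSpace ℝ (Fin n) | ∀ j, f j x ≤ β j}).Nonempty) :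
    ∃ B : ℝ, ∀ zs : EuclideanSpace ℝ (Fin n),
      WeakPareto f zs → (∀ j, f j zs ≤ β j) →
        sInf {r : ℝ | ∃ z : EuclideanSpace ℝ (Fin n), (∀ j, f j z = f j zs) ∧ r = ‖z‖} ≤ B :=
  stmt_9_general n m f j₀ hlev β
end

section
/- Let F = (f₁,…,f_m) with each fⱼ convex and differentiable, and let β ∈ ℝᵐ with L_F(β) nonempty. Assume that for every x ∈ L_F(β) there exists a weakly Pareto optimal x* with F(x*) ≤ F(x). Then for all x ∈ L_F(β), the merit function u₀(x) = sup_{z ∈ ℝⁿ} min_{1≤j≤m}[fⱼ(x) - fⱼ(z)] satisfies u₀(x) = sup_{F* ∈ F(P_w ∩ L_F(β))} inf_{z ∈ F^{-1}(F*)} min_{1≤j≤m}[fⱼ(x) - fⱼ(z)]. -/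
open Finset

section MinGap

variable {ι α : Type*} [Fintype ι] (hι : (univ : Finset ι).Nonempty) (f : ι → α → ℝ)

/-- The paper's `f(x; z)`. -/
def minGap (x z : α) : ℝ :=
  univ.inf' hι fun j => f j x - f j z

variable {hι f}

theorem minGap_le_minGap_of_le {x z z' : α} (h : ∀ j, f j z' ≤ f j z) :
    minGap hι f x z ≤ minGap hι f x z' :=
  inf'_mono_fun fun j _ => by linarith [h j]

theorem minGap_self (x : α) : minGap hι f x x = 0 := by
  simp only [minGap, sub_self, inf'_const]

theorem minGap_neg_of_lt {x z : α} {j : ι} (hj : f j x < f j z) : minGap hι f x z < 0 :=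
  (inf'_le _ (mem_univ j)).trans_lt (sub_neg.mpr hj)

theorem sInf_minGap_fiber (x zs : α) :
    sInf {s | ∃ z, (∀ j, f j z = f j zs) ∧ s = minGap hι f x z} = minGap hι f x zs := by
  have hfiber : {s | ∃ z, (∀ j, f j z = f j zs) ∧ s = minGap hι f x z} = {minGap hι f x zs} := by
    ext s
    constructor
    · rintro ⟨z, hz, rfl⟩
      exact le_antisymm (minGap_le_minGap_of_le fun j => (hz j).ge)
        (minGap_le_minGap_of_le fun j => (hz j).le)
    · rintro rfl
      exact ⟨zs, fun _ => rfl, rfl⟩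
  rw [hfiber, csInf_singleton]

theorem exists_minGap_le_of_dominated {P : α → Prop} {β : ι → ℝ} {x : α}
    (hx : ∀ j, f j x ≤ β j)
    (hP : ∀ y, (∀ j, f j y ≤ β j) → ∃ ys, P ys ∧ ∀ j, f j ys ≤ f j y) (z : α) :
    ∃ zs, P zs ∧ (∀ j, f j zs ≤ β j) ∧ minGap hι f x z ≤ minGap hι f x zs := by
  by_cases hz : ∀ j, f j z ≤ β j
  · obtain ⟨zs, hzs, hle⟩ := hP z hz
    exact ⟨zs, hzs, fun j => (hle j).trans (hz j), minGap_le_minGap_of_le hle⟩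
  · obtain ⟨j, hj⟩ := not_forall.mp hz
    obtain ⟨xs, hxs, hle⟩ := hP x hx
    refine ⟨xs, hxs, fun j => (hle j).trans (hx j), ?_⟩
    calc minGap hι f x z ≤ 0 := (minGap_neg_of_lt ((hx j).trans_lt (not_le.mp hj))).le
      _ = minGap hι f x x := (minGap_self x).symm
      _ ≤ minGap hι f x xs := minGap_le_minGap_of_le hle

end MinGap

theorem stmt_10_general (n m : ℕ) (hm : (Finset.univ : Finset (Fin m)).Nonempty)
    (f : Fin m → EuclideanSpace ℝ (Fin n) → ℝ)
    (β : Fin m → ℝ)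
    (hpw : ∀ x : EuclideanSpace ℝ (Fin n), (∀ j, f j x ≤ β j) →
      ∃ xs : EuclideanSpace ℝ (Fin n), WeakPareto f xs ∧ ∀ j, f j xs ≤ f j x) :
    ∀ x : EuclideanSpace ℝ (Fin n), (∀ j, f j x ≤ β j) →
      sSup {r : ℝ | ∃ z : EuclideanSpace ℝ (Fin n),
          r = Finset.univ.inf' hm fun j => f j x - f j z} =
      sSup {r : ℝ | ∃ zs : EuclideanSpace ℝ (Fin n),
          WeakPareto f zs ∧ (∀ j, f j zs ≤ β j) ∧
          r = sInf {s : ℝ | ∃ z : EuclideanSpace ℝ (Fin n),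
              (∀ j, f j z = f j zs) ∧ s = Finset.univ.inf' hm fun j => f j x - f j z}} := by
  intro x hx
  apply csSup_eq_csSup_of_forall_exists_le
  · rintro _ ⟨z, rfl⟩
    obtain ⟨zs, hzs, hzsβ, hle⟩ := exists_minGap_le_of_dominated (hι := hm) hx hpw z
    exact ⟨_, ⟨zs, hzs, hzsβ, rfl⟩, hle.trans_eq (sInf_minGap_fiber x zs).symm⟩
  · rintro _ ⟨zs, -, -, rfl⟩
    exact ⟨_, ⟨zs, rfl⟩, (sInf_minGap_fiber x zs).le⟩

theorem stmt_10 (n m : ℕ) (hm : (Finset.univ : Finset (Fin m)).Nonempty)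
    (f : Fin m → EuclideanSpace ℝ (Fin n) → ℝ)
    (hconv : ∀ j, ConvexOn ℝ Set.univ (f j))
    (hdiff : ∀ j, Differentiable ℝ (f j))
    (β : Fin m → ℝ)
    (hne : ({x : EuclideanSpace ℝ (Fin n) | ∀ j, f j x ≤ β j}).Nonempty)
    (hpw : ∀ x : EuclideanSpace ℝ (Fin n), (∀ j, f j x ≤ β j) →
      ∃ xs : EuclideanSpace ℝ (Fin n), WeakPareto f xs ∧ ∀ j, f j xs ≤ f j x) :
    ∀ x : EuclideanSpace ℝ (Fin n), (∀ j, f j x ≤ β j) →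
      sSup {r : ℝ | ∃ z : EuclideanSpace ℝ (Fin n),
          r = Finset.univ.inf' hm fun j => f j x - f j z} =
      sSup {r : ℝ | ∃ zs : EuclideanSpace ℝ (Fin n),
          WeakPareto f zs ∧ (∀ j, f j zs ≤ β j) ∧
          r = sInf {s : ℝ | ∃ z : EuclideanSpace ℝ (Fin n),
              (∀ j, f j z = f j zs) ∧ s = Finset.univ.inf' hm fun j => f j x - f j z}} :=
  stmt_10_general n m hm f β hpw
end

section
/- Let C = conv{p₁,…,p_m} ⊆ ℝⁿ, a > b ≥ 0, u, w ∈ ℝⁿ, and suppose x# ∈ ℝⁿ satisfies a·x# = u - proj_C(w - b·x#). Then x# = (u - v#)/a where v# = proj_C((a·w - b·u)/(a - b)). -/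
/-!
A point `v ∈ C` is the projection of `y` iff `⟪y - v, q - v⟫ ≤ 0` for all `q ∈ C`, and this
variational inequality has at most one solution. For `v₁ = proj_C (w - b • x#)` the fixed-point
equation gives `(a • w - b • u) / (a - b) - v₁ = (a / (a - b)) • (w - b • x# - v₁)`, a nonnegative
multiple, so `v₁` also solves the inequality for `(a • w - b • u) / (a - b)`. Hence `v₁ = v#`.
-/

open scoped InnerProductSpace

section ConvexProjection

variable {F : Type*} [NormedAddCommGroup F] [InnerProductSpace ℝ F] {K : Set F} {u v v' : F}

theorem real_inner_le_zero_of_forall_norm_sub_le (hK : Convex ℝ K) (hv : v ∈ K)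
    (hmin : ∀ q ∈ K, ‖v - u‖ ≤ ‖q - u‖) : ∀ q ∈ K, ⟪u - v, q - v⟫_ℝ ≤ 0 := by
  have hmin' : IsMinOn (fun q => ‖u - q‖) K v := isMinOn_iff.2 fun q hq => by
    simpa only [norm_sub_rev u] using hmin q hq
  exact (norm_eq_iInf_iff_real_inner_le_zero hK hv).1 (hmin'.iInf_eq hv).symm

theorem real_inner_le_zero_of_sub_eq_smul {z : F} {c : ℝ} (hc : 0 ≤ c) (hz : z - v = c • (u - v))
    (h : ∀ q ∈ K, ⟪u - v, q - v⟫_ℝ ≤ 0) : ∀ q ∈ K, ⟪z - v, q - v⟫_ℝ ≤ 0 := fun q hq => by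
  rw [hz, real_inner_smul_left]
  exact mul_nonpos_of_nonneg_of_nonpos hc (h q hq)

theorem eq_of_forall_real_inner_le_zero (hv : v ∈ K) (hv' : v' ∈ K)
    (h : ∀ q ∈ K, ⟪u - v, q - v⟫_ℝ ≤ 0) (h' : ∀ q ∈ K, ⟪u - v', q - v'⟫_ℝ ≤ 0) : v = v' := by
  have hsum : ⟪u - v, v' - v⟫_ℝ + ⟪u - v', v - v'⟫_ℝ = ‖v - v'‖ ^ 2 := by
    rw [← real_inner_self_eq_norm_sq, ← neg_sub v v', inner_neg_right, neg_add_eq_sub,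
      ← inner_sub_left, sub_sub_sub_cancel_left]
  have hnorm : ‖v - v'‖ ^ 2 ≤ 0 := hsum ▸ add_nonpos (h v' hv') (h' v hv)
  exact sub_eq_zero.1 (norm_eq_zero.1 (pow_eq_zero_iff two_ne_zero |>.1
    (le_antisymm hnorm (sq_nonneg _))))

end ConvexProjection

theorem stmt_13 (n m : ℕ) (p : Fin m → EuclideanSpace ℝ (Fin n))
    (a b : ℝ) (hb : 0 ≤ b) (hab : b < a)
    (u w xh v₁ vh : EuclideanSpace ℝ (Fin n))
    (hv₁ : v₁ ∈ convexHull ℝ (Set.range p))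
    (hv₁min : ∀ q ∈ convexHull ℝ (Set.range p),
      ‖v₁ - (w - b • xh)‖ ≤ ‖q - (w - b • xh)‖)
    (heq : a • xh = u - v₁)
    (hvh : vh ∈ convexHull ℝ (Set.range p))
    (hvhmin : ∀ q ∈ convexHull ℝ (Set.range p),
      ‖vh - (a - b)⁻¹ • (a • w - b • u)‖ ≤ ‖q - (a - b)⁻¹ • (a • w - b • u)‖) :
    xh = a⁻¹ • (u - vh) := by
  have ha : a ≠ 0 := by linarith
  have hxh : xh = a⁻¹ • (u - v₁) := by
    rw [← heq, smul_smul, inv_mul_cancel₀ ha, one_smul]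
  have hscale : (a - b)⁻¹ • (a • w - b • u) - v₁ = (a / (a - b)) • (w - b • xh - v₁) := by
    have : a - b ≠ 0 := by linarith
    rw [hxh]
    match_scalars <;> field_simp; ring
  have hK := convex_convexHull ℝ (Set.range p)
  have hv₁' := real_inner_le_zero_of_sub_eq_smul (div_nonneg (by linarith) (by linarith)) hscale
    (real_inner_le_zero_of_forall_norm_sub_le hK hv₁ hv₁min)
  rw [eq_of_forall_real_inner_le_zero hvh hv₁
    (real_inner_le_zero_of_forall_norm_sub_le hK hvh hvhmin) hv₁', hxh]
end

section
/- Let C = conv{p₁,…,p_m} ⊆ ℝⁿ, a > 0, u, w ∈ ℝⁿ, and suppose x# ∈ ℝⁿ satisfies a·x# = u - proj_C(w - a·x#). Then x# = (u - v#)/a for some v# ∈ argmin_{v ∈ C} ⟨v, u - w⟩. -/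
open InnerProductSpace

/-!
The projection `v₁` of `w - a • xh` onto `C` satisfies the variational inequality
`⟪w - a • xh - v₁, q - v₁⟫ ≤ 0` on `C`, i.e. it minimizes `⟪·, v₁ - (w - a • xh)⟫` over `C`.
The fixed-point equation `a • xh = u - v₁` makes that direction exactly `u - w`.
-/

theorem IsMinOn.norm_sub_eq_iInf {E : Type*} [SeminormedAddCommGroup E] {K : Set E} {x v : E}
    (hv : v ∈ K) (hmin : IsMinOn (fun q => ‖q - x‖) K v) :
    ‖x - v‖ = ⨅ q : K, ‖x - q‖ := by
  have : Nonempty K := ⟨⟨v, hv⟩⟩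
  refine le_antisymm (le_ciInf fun q => ?_) (ciInf_le (f := fun q : K => ‖x - q‖) ⟨0, ?_⟩ ⟨v, hv⟩)
  · rw [norm_sub_rev, norm_sub_rev x]
    exact isMinOn_iff.1 hmin q q.2
  · rintro _ ⟨q, rfl⟩
    exact norm_nonneg _

section

variable {F : Type*} [NormedAddCommGroup F] [InnerProductSpace ℝ F] {K : Set F} {x v : F}

theorem Convex.isMinOn_inner_of_isMinOn_norm_sub (hK : Convex ℝ K) (hv : v ∈ K)
    (hmin : IsMinOn (fun q => ‖q - x‖) K v) :
    IsMinOn (fun q => ⟪q, v - x⟫_ℝ) K v := by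
  have hvar := (norm_eq_iInf_iff_real_inner_le_zero hK hv).1 (hmin.norm_sub_eq_iInf hv)
  refine isMinOn_iff.2 fun q hq => ?_
  have h : ⟪x - v, q - v⟫_ℝ ≤ 0 := hvar q hq
  rw [← neg_sub v x, inner_neg_left, real_inner_comm, inner_sub_left] at h
  linarith

end

theorem stmt_14 (n m : ℕ) (p : Fin m → EuclideanSpace ℝ (Fin n))
    (a : ℝ) (ha : 0 < a)
    (u w xh v₁ : EuclideanSpace ℝ (Fin n))
    (hv₁ : v₁ ∈ convexHull ℝ (Set.range p))
    (hv₁min : ∀ q ∈ convexHull ℝ (Set.range p),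
      ‖v₁ - (w - a • xh)‖ ≤ ‖q - (w - a • xh)‖)
    (heq : a • xh = u - v₁) :
    ∃ vh ∈ convexHull ℝ (Set.range p),
      (∀ v ∈ convexHull ℝ (Set.range p), ⟪vh, u - w⟫_ℝ ≤ ⟪v, u - w⟫_ℝ) ∧
      xh = a⁻¹ • (u - vh) := by
  have hlin := (convex_convexHull ℝ (Set.range p)).isMinOn_inner_of_isMinOn_norm_sub hv₁
    (isMinOn_iff.2 hv₁min)
  have hdir : v₁ - (w - a • xh) = u - w := by
    rw [heq]
    abel
  rw [hdir] at hlin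
  exact ⟨v₁, hv₁, isMinOn_iff.1 hlin, by rw [← heq, smul_smul, inv_mul_cancel₀ ha.ne', one_smul]⟩
end

section
/- Define θ₀ = 1 and θ_k = [(1+τ₀)⋯(1+τ_{k-1})]^{-1} with τ_i = (γ_i + sqrt(γ_i² + 4Lγ_i))/(2L), γ_{i+1} = (γ_i + μτ_i)/(1+τ_i), γ₀ > 0, 0 ≤ μ ≤ L. Then θ_k ≤ min{ 4L/(2√L + √γ₀·k)², (1 + sqrt(min{μ,γ₀}/L))^{-k} } for all k ≥ 1. -/
/-!
The step `τ` solves `L τ² = γ (1 + τ)`, and `γ_{i+1}` is a convex combination of `γ_i` and `μ`,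
so `γ_i ≥ min{μ, γ₀}` and hence `τ_i ≥ √(min{μ, γ₀} / L)`, which gives the linear rate.
For the sublinear rate let `P_k = θ_k⁻¹`. Since `γ_{k+1} P_{k+1} = (γ_k + μ τ_k) P_k`, the product
`γ_k P_k` never drops below `γ₀`, so `L (P_{k+1} - P_k)² = L P_k² τ_k² = γ_k P_k · P_{k+1} ≥ γ₀ P_{k+1}`.
This forces `√P_{k+1} - √P_k ≥ √(γ₀ / L) / 2`.
-/

open Finset

lemma mul_sq_eq_mul_one_add_of_eq_root {L g t : ℝ} (hL : 0 < L) (hg : 0 ≤ g)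
    (ht : t = (g + √(g ^ 2 + 4 * L * g)) / (2 * L)) : L * t ^ 2 = g * (1 + t) := by
  have hs : √(g ^ 2 + 4 * L * g) ^ 2 = g ^ 2 + 4 * L * g := Real.sq_sqrt (by positivity)
  generalize √(g ^ 2 + 4 * L * g) = s at ht hs
  subst ht
  field_simp
  linear_combination hs

lemma sqrt_div_le_of_mul_sq_eq {L g t : ℝ} (hL : 0 < L) (hg : 0 ≤ g) (ht : 0 ≤ t)
    (h : L * t ^ 2 = g * (1 + t)) : √(g / L) ≤ t := by
  rw [← Real.sqrt_sq ht]
  refine Real.sqrt_le_sqrt ?_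
  rw [div_le_iff₀ hL]
  nlinarith [mul_nonneg hg ht]

lemma min_le_div_one_add (a b : ℝ) {t : ℝ} (ht : 0 ≤ t) :
    min a b ≤ (a + b * t) / (1 + t) := by
  rw [le_div_iff₀ (by positivity)]
  nlinarith [min_le_left a b, min_le_right a b]

lemma one_add_mul_div_two_le_sqrt {P : ℕ → ℝ} {c : ℝ} (hc : 0 ≤ c) (h0 : P 0 = 1)
    (hstep : ∀ n, c * √(P (n + 1)) ≤ P (n + 1) - P n) (n : ℕ) :
    1 + c * n / 2 ≤ √(P n) := by
  induction n with
  | zero => simp [h0]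
  | succ n ih =>
    have hPn : 1 ≤ P n := Real.one_le_sqrt.1 (le_trans (le_add_of_nonneg_right (by positivity)) ih)
    have hmono : P n ≤ P (n + 1) := by
      linarith [hstep n, mul_nonneg hc (Real.sqrt_nonneg (P (n + 1)))]
    have hu := Real.sq_sqrt (zero_le_one.trans hPn)
    have hv := Real.sq_sqrt (zero_le_one.trans (hPn.trans hmono))
    have hsqrt_mono : √(P n) ≤ √(P (n + 1)) := Real.sqrt_le_sqrt hmono
    have hv_pos : 0 < √(P (n + 1)) := by linarith [Real.one_le_sqrt.2 hPn]
    -- `P (n+1) - P n = (v - u) (v + u) ≤ 2 v (v - u)` for `u = √(P n) ≤ v = √(P (n+1))`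
    have hgap : c ≤ 2 * (√(P (n + 1)) - √(P n)) := by
      refine le_of_mul_le_mul_right ?_ hv_pos
      nlinarith [hstep n]
    push_cast
    linarith

lemma min_le_gamma {L μ γ₀ : ℝ} {γ τ : ℕ → ℝ} (hL : 0 < L) (hμ : 0 ≤ μ) (hγ₀ : 0 ≤ γ₀)
    (hγ0 : γ 0 = γ₀) (hτ : ∀ i, τ i = (γ i + √(γ i ^ 2 + 4 * L * γ i)) / (2 * L))
    (hγ : ∀ i, γ (i + 1) = (γ i + μ * τ i) / (1 + τ i)) (n : ℕ) : min μ γ₀ ≤ γ n := by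
  induction n with
  | zero => exact hγ0 ▸ min_le_right μ γ₀
  | succ n ih =>
    have hγn : 0 ≤ γ n := (le_min hμ hγ₀).trans ih
    have hτn : 0 ≤ τ n := by rw [hτ n]; positivity
    calc min μ γ₀ ≤ min (γ n) μ := le_min ih (min_le_left μ γ₀)
      _ ≤ γ (n + 1) := hγ n ▸ min_le_div_one_add (γ n) μ hτn

lemma le_gamma_mul_prod {μ γ₀ : ℝ} {γ τ : ℕ → ℝ} (hμ : 0 ≤ μ) (hτ0 : ∀ i, 0 ≤ τ i)
    (hγ0 : γ 0 = γ₀) (hγ : ∀ i, γ (i + 1) = (γ i + μ * τ i) / (1 + τ i)) (n : ℕ) :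
    γ₀ ≤ γ n * ∏ i ∈ range n, (1 + τ i) := by
  induction n with
  | zero => simp [hγ0]
  | succ n ih =>
    have hP : 0 ≤ ∏ i ∈ range n, (1 + τ i) :=
      prod_nonneg fun i _ => by linarith [hτ0 i]
    have hrec : γ (n + 1) * (1 + τ n) = γ n + μ * τ n := by
      rw [hγ n, div_mul_cancel₀ _ (by linarith [hτ0 n])]
    calc γ₀ ≤ γ n * ∏ i ∈ range n, (1 + τ i) := ih
      _ ≤ (γ n + μ * τ n) * ∏ i ∈ range n, (1 + τ i) := by
        gcongr; linarith [mul_nonneg hμ (hτ0 n)]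
      _ = γ (n + 1) * ∏ i ∈ range (n + 1), (1 + τ i) := by
        rw [prod_range_succ, ← hrec]; ring

lemma sqrt_mul_sqrt_prod_le_sub {L γ₀ : ℝ} {γ τ : ℕ → ℝ} (hL : 0 < L)
    (hτ0 : ∀ i, 0 ≤ τ i) (hLτ : ∀ i, L * τ i ^ 2 = γ i * (1 + τ i))
    (hγP : ∀ n, γ₀ ≤ γ n * ∏ i ∈ range n, (1 + τ i)) (n : ℕ) :
    √(γ₀ / L) * √(∏ i ∈ range (n + 1), (1 + τ i)) ≤
      ∏ i ∈ range (n + 1), (1 + τ i) - ∏ i ∈ range n, (1 + τ i) := by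
  set P := ∏ i ∈ range n, (1 + τ i)
  have hP : 0 ≤ P := prod_nonneg fun i _ => by linarith [hτ0 i]
  have hτn := hτ0 n
  rw [prod_range_succ, ← Real.sqrt_mul' _ (by positivity),
    show P * (1 + τ n) - P = P * τ n by ring, ← Real.sqrt_sq (by positivity : 0 ≤ P * τ n)]
  refine Real.sqrt_le_sqrt ?_
  -- `L (P τ)² = (γ P) · P (1 + τ)` and `γ P ≥ γ₀`
  rw [div_mul_eq_mul_div, div_le_iff₀ hL]
  calc γ₀ * (P * (1 + τ n)) ≤ γ n * P * (P * (1 + τ n)) := by gcongr; exact hγP n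
    _ = (P * τ n) ^ 2 * L := by linear_combination P ^ 2 * (hLτ n).symm

lemma inv_le_of_one_add_le_sqrt {L γ₀ P k : ℝ} (hL : 0 < L) (hγ₀ : 0 ≤ γ₀) (hk : 0 ≤ k)
    (h : 1 + √(γ₀ / L) * k / 2 ≤ √P) :
    P⁻¹ ≤ 4 * L / (2 * √L + √γ₀ * k) ^ 2 := by
  have hrw : 4 * L / (2 * √L + √γ₀ * k) ^ 2 = ((1 + √(γ₀ / L) * k / 2) ^ 2)⁻¹ := by
    rw [Real.sqrt_div hγ₀]
    field_simp
    rw [Real.sq_sqrt hL.le]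
    ring
  have hP : 1 ≤ P := Real.one_le_sqrt.1 (le_trans (le_add_of_nonneg_right (by positivity)) h)
  rw [hrw]
  refine inv_anti₀ (by positivity) ?_
  calc (1 + √(γ₀ / L) * k / 2) ^ 2 ≤ √P ^ 2 := by gcongr
    _ = P := Real.sq_sqrt (by linarith)

theorem stmt_16_general (L μ γ₀ : ℝ) (hL : 0 < L) (hμ : 0 ≤ μ) (hγ₀ : 0 < γ₀)
    (γ τ θ : ℕ → ℝ)
    (hγ0 : γ 0 = γ₀)
    (hτ : ∀ i, τ i = (γ i + Real.sqrt ((γ i) ^ 2 + 4 * L * γ i)) / (2 * L))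
    (hγ : ∀ i, γ (i + 1) = (γ i + μ * τ i) / (1 + τ i))
    (hθ : ∀ k, θ k = (∏ i ∈ Finset.range k, (1 + τ i))⁻¹) :
    ∀ k : ℕ, 1 ≤ k →
      θ k ≤ min (4 * L / (2 * Real.sqrt L + Real.sqrt γ₀ * k) ^ 2)
                ((1 + Real.sqrt (min μ γ₀ / L))⁻¹ ^ k) := by
  intro k _
  have hγm := min_le_gamma hL hμ hγ₀.le hγ0 hτ hγ
  have hγ_nonneg (i : ℕ) : 0 ≤ γ i := (le_min hμ hγ₀.le).trans (hγm i)
  have hτ0 (i : ℕ) : 0 ≤ τ i := by have := hγ_nonneg i; rw [hτ i]; positivity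
  have hLτ (i : ℕ) := mul_sq_eq_mul_one_add_of_eq_root hL (hγ_nonneg i) (hτ i)
  have hgrowth := one_add_mul_div_two_le_sqrt (P := fun n ↦ ∏ i ∈ range n, (1 + τ i))
    (Real.sqrt_nonneg _) (prod_range_zero _)
    (sqrt_mul_sqrt_prod_le_sub hL hτ0 hLτ (le_gamma_mul_prod hμ hτ0 hγ0 hγ))
  have hτm (i : ℕ) : √(min μ γ₀ / L) ≤ τ i :=
    (Real.sqrt_le_sqrt (by gcongr; exact hγm i)).trans
      (sqrt_div_le_of_mul_sq_eq hL (hγ_nonneg i) (hτ0 i) (hLτ i))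
  rw [hθ k]
  refine le_min (inv_le_of_one_add_le_sqrt hL hγ₀.le k.cast_nonneg (hgrowth k)) ?_
  rw [inv_pow]
  refine inv_anti₀ (by positivity) ?_
  calc (1 + √(min μ γ₀ / L)) ^ k = ∏ _i ∈ range k, (1 + √(min μ γ₀ / L)) := by
        rw [prod_const, card_range]
    _ ≤ ∏ i ∈ range k, (1 + τ i) :=
        prod_le_prod (fun _ _ ↦ by positivity) fun i _ ↦ by linarith [hτm i]

theorem stmt_16 (L μ γ₀ : ℝ) (hL : 0 < L) (hμ : 0 ≤ μ) (hμL : μ ≤ L) (hγ₀ : 0 < γ₀)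
    (γ τ θ : ℕ → ℝ)
    (hγ0 : γ 0 = γ₀)
    (hτ : ∀ i, τ i = (γ i + Real.sqrt ((γ i) ^ 2 + 4 * L * γ i)) / (2 * L))
    (hγ : ∀ i, γ (i + 1) = (γ i + μ * τ i) / (1 + τ i))
    (hθ : ∀ k, θ k = (∏ i ∈ Finset.range k, (1 + τ i))⁻¹) :
    ∀ k : ℕ, 1 ≤ k →
      θ k ≤ min (4 * L / (2 * Real.sqrt L + Real.sqrt γ₀ * k) ^ 2)
                ((1 + Real.sqrt (min μ γ₀ / L))⁻¹ ^ k) :=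
  stmt_16_general L μ γ₀ hL hμ hγ₀ γ τ θ hγ0 hτ hγ hθ
end

section
/- Suppose each fⱼ : ℝⁿ → ℝ is differentiable, μⱼ-strongly convex with L-Lipschitz gradient (μ = min μⱼ ≥ 0). Let (γ, X, Z) be a C¹ solution on (0,∞) of γ' = μ - γ, X' = Z - X, γZ' = μ(X - Z) - p where p = Σⱼ λⱼ∇fⱼ(X) for some λ ∈ Δ_m with ⟨∇fⱼ(X) - p, Z - X⟩ ≤ 0 for all j. Then for any fixed z ∈ ℝⁿ the Lyapunov function E(t) = min_j[fⱼ(X(t)) - fⱼ(z)] + (γ(t)/2)‖Z(t) - z‖² satisfies E'(t) ≤ -E(t) - (μ/2)‖Z(t) - X(t)‖² at every t where E is differentiable with E'(t) = ⟨∇f_{i₀}(X(t)), X'(t)⟩ + d/dt[(γ/2)‖Z - z‖²] for some index i₀ attaining the min. -/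
/-!
Write `g = ∇f_{i₀}(X)`, `M = min_j (f_j(X) - f_j(z))` and `A = ‖Z - z‖²`. The projection condition
gives `⟪g, Z - X⟫ ≤ ⟪p, Z - X⟫`, and the flow equation turns `γ ⟪Z', Z - z⟫` into
`μ ⟪X - Z, Z - z⟫ - ⟪p, Z - z⟫`, so that `E'` is bounded by `⟪p, z - X⟫` plus quadratic terms.
Since `p` is a convex combination of the gradients, strong convexity of every `f_j` (with modulus
at least `μ`) bounds `⟪p, z - X⟫` by `-M - μ/2 ‖z - X‖²`. The polarization identity for
`⟪X - Z, Z - z⟫` then shows that the quadratic terms combine exactly into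
`-γ/2 A - μ/2 ‖Z - X‖²`.
-/

open InnerProductSpace

section

variable {E : Type*} [NormedAddCommGroup E] [InnerProductSpace ℝ E]

theorem inner_sum_smul_le_of_mem_stdSimplex {ι : Type*} [Fintype ι] {lam : ι → ℝ}
    (hlam : lam ∈ stdSimplex ℝ ι) {g : ι → E} {v : E} {c : ℝ} (h : ∀ j, ⟪g j, v⟫_ℝ ≤ c) :
    ⟪∑ j, lam j • g j, v⟫_ℝ ≤ c :=
  calc ⟪∑ j, lam j • g j, v⟫_ℝ = ∑ j, lam j * ⟪g j, v⟫_ℝ := by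
        simp only [sum_inner, real_inner_smul_left]
    _ ≤ ∑ j, lam j * c := Finset.sum_le_sum fun j _ => mul_le_mul_of_nonneg_left (h j) (hlam.1 j)
    _ = c := by rw [← Finset.sum_mul, hlam.2, one_mul]

theorem inner_le_of_strong_convexity_inequality {f : E → ℝ} {g x z : E} {μ' μ M : ℝ}
    (hsc : f x + ⟪g, z - x⟫_ℝ + μ' / 2 * ‖z - x‖ ^ 2 ≤ f z) (hμ : μ ≤ μ')
    (hM : M ≤ f x - f z) :
    ⟪g, z - x⟫_ℝ ≤ -M - μ / 2 * ‖z - x‖ ^ 2 := by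
  nlinarith [sq_nonneg ‖z - x‖]

theorem two_mul_inner_sub_sub (a b c : E) :
    2 * ⟪a - b, b - c⟫_ℝ = ‖a - c‖ ^ 2 - ‖b - c‖ ^ 2 - ‖a - b‖ ^ 2 := by
  rw [show a - c = (a - b) + (b - c) by abel, norm_add_sq_real]
  ring

/-- `x, w, w'` stand for `X(t), Z(t), Z'(t)`, and `M` for the minimum in `E(t)`. -/
theorem lyapunov_derivative_le {x w w' z g p : E} {γ μ M : ℝ}
    (hflow : γ • w' = μ • (x - w) - p) (hproj : ⟪g - p, w - x⟫_ℝ ≤ 0)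
    (hp : ⟪p, z - x⟫_ℝ ≤ -M - μ / 2 * ‖z - x‖ ^ 2) :
    ⟪g, w - x⟫_ℝ + ((μ - γ) / 2 * ‖w - z‖ ^ 2 + γ * ⟪w', w - z⟫_ℝ) ≤
      -(M + γ / 2 * ‖w - z‖ ^ 2) - μ / 2 * ‖w - x‖ ^ 2 := by
  have hflow' : γ * ⟪w', w - z⟫_ℝ = μ * ⟪x - w, w - z⟫_ℝ - ⟪p, w - z⟫_ℝ := by
    rw [← real_inner_smul_left, hflow, inner_sub_left, real_inner_smul_left]
  have hsplit : ⟪p, w - x⟫_ℝ = ⟪p, w - z⟫_ℝ + ⟪p, z - x⟫_ℝ := by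
    rw [← inner_add_right, sub_add_sub_cancel]
  have hpolar := two_mul_inner_sub_sub x w z
  rw [inner_sub_left] at hproj
  rw [norm_sub_rev z x] at hp
  rw [norm_sub_rev x w] at hpolar
  rw [hflow']
  linear_combination hproj + hp + hsplit + μ / 2 * hpolar

end

theorem stmt_17_general (n m : ℕ) (hm : (Finset.univ : Finset (Fin m)).Nonempty)
    (f : Fin m → EuclideanSpace ℝ (Fin n) → ℝ)
    (f' : Fin m → EuclideanSpace ℝ (Fin n) → EuclideanSpace ℝ (Fin n))
    (μs : Fin m → ℝ)
    (hsc : ∀ j (x z : EuclideanSpace ℝ (Fin n)),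
      f j x + ⟪f' j x, z - x⟫_ℝ + μs j / 2 * ‖z - x‖ ^ 2 ≤ f j z)
    (μ : ℝ) (hμ : μ = Finset.univ.inf' hm μs)
    (γ : ℝ → ℝ) (X Z : ℝ → EuclideanSpace ℝ (Fin n))
    (z : EuclideanSpace ℝ (Fin n))
    (t : ℝ)
    (Z't : EuclideanSpace ℝ (Fin n))
    (lam : Fin m → ℝ) (hlam : lam ∈ stdSimplex ℝ (Fin m))
    (p : EuclideanSpace ℝ (Fin n)) (hp : p = ∑ j, lam j • f' j (X t))
    (hflow : γ t • Z't = μ • (X t - Z t) - p)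
    (hproj : ∀ j, ⟪f' j (X t) - p, Z t - X t⟫_ℝ ≤ 0)
    (E : ℝ → ℝ)
    (hE : ∀ s, E s = (Finset.univ.inf' hm fun j => f j (X s) - f j z) +
      γ s / 2 * ‖Z s - z‖ ^ 2)
    (i₀ : Fin m)
    (E't : ℝ)
    (hE'eq : E't = ⟪f' i₀ (X t), Z t - X t⟫_ℝ +
      ((μ - γ t) / 2 * ‖Z t - z‖ ^ 2 + γ t * ⟪Z't, Z t - z⟫_ℝ)) :
    E't ≤ -E t - μ / 2 * ‖Z t - X t‖ ^ 2 := by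
  have hp_bound : ⟪p, z - X t⟫_ℝ ≤
      -(Finset.univ.inf' hm fun j => f j (X t) - f j z) - μ / 2 * ‖z - X t‖ ^ 2 := by
    rw [hp]
    refine inner_sum_smul_le_of_mem_stdSimplex hlam fun j => ?_
    exact inner_le_of_strong_convexity_inequality (hsc j (X t) z)
      (hμ ▸ Finset.inf'_le μs (Finset.mem_univ j)) (Finset.inf'_le _ (Finset.mem_univ j))
  rw [hE'eq, hE t]
  exact lyapunov_derivative_le hflow (hproj i₀) hp_bound

theorem stmt_17 (n m : ℕ) (hm : (Finset.univ : Finset (Fin m)).Nonempty)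
    (f : Fin m → EuclideanSpace ℝ (Fin n) → ℝ)
    (f' : Fin m → EuclideanSpace ℝ (Fin n) → EuclideanSpace ℝ (Fin n))
    (hgrad : ∀ j x, HasGradientAt (f j) (f' j x) x)
    (L : ℝ) (hLip : ∀ j (a b : EuclideanSpace ℝ (Fin n)), ‖f' j a - f' j b‖ ≤ L * ‖a - b‖)
    (μs : Fin m → ℝ) (hμs : ∀ j, 0 ≤ μs j)
    (hsc : ∀ j (x z : EuclideanSpace ℝ (Fin n)),
      f j x + ⟪f' j x, z - x⟫_ℝ + μs j / 2 * ‖z - x‖ ^ 2 ≤ f j z)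
    (μ : ℝ) (hμ : μ = Finset.univ.inf' hm μs)
    (γ : ℝ → ℝ) (X Z : ℝ → EuclideanSpace ℝ (Fin n))
    (z : EuclideanSpace ℝ (Fin n))
    (t : ℝ) (ht : 0 < t) (hγpos : 0 < γ t)
    (hγ' : HasDerivAt γ (μ - γ t) t)
    (hX' : HasDerivAt X (Z t - X t) t)
    (Z't : EuclideanSpace ℝ (Fin n)) (hZ' : HasDerivAt Z Z't t)
    (lam : Fin m → ℝ) (hlam : lam ∈ stdSimplex ℝ (Fin m))
    (p : EuclideanSpace ℝ (Fin n)) (hp : p = ∑ j, lam j • f' j (X t))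
    (hflow : γ t • Z't = μ • (X t - Z t) - p)
    (hproj : ∀ j, ⟪f' j (X t) - p, Z t - X t⟫_ℝ ≤ 0)
    (E : ℝ → ℝ)
    (hE : ∀ s, E s = (Finset.univ.inf' hm fun j => f j (X s) - f j z) +
      γ s / 2 * ‖Z s - z‖ ^ 2)
    (i₀ : Fin m)
    (hi₀ : f i₀ (X t) - f i₀ z = Finset.univ.inf' hm fun j => f j (X t) - f j z)
    (E't : ℝ) (hE' : HasDerivAt E E't t)
    (hE'eq : E't = ⟪f' i₀ (X t), Z t - X t⟫_ℝ +
      ((μ - γ t) / 2 * ‖Z t - z‖ ^ 2 + γ t * ⟪Z't, Z t - z⟫_ℝ)) :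
    E't ≤ -E t - μ / 2 * ‖Z t - X t‖ ^ 2 :=
  stmt_17_general n m hm f f' μs hsc μ hμ γ X Z z t Z't lam hlam p hp hflow hproj E hE i₀ E't hE'eq
end
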